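/- arXiv:1508.01759 — 2 statements merged into one kernel-verified Lean document; each statement's English description precedes it below -/
import Mathlib

section
/- Let G be a connected triangle-free graph with chromatic number k ≥ 4, and let H = G ⊠ K₂ be the graph on vertex set V(G) × {0,1} in which (u,i) and (v,j) are adjacent if and only if (u = v and i ≠ j) or u and v are adjacent in G. Then for every integer t with 3 ≤ t ≤ k − 1, the graph H admits no K₃-WORM coloring using exactly t colors. -/
/-!
Every edge `uv` of `G` yields the triangles `(u,0), (u,1), (v,i)` of `G ⊠ K₂`. If the two copies
of `u` share a color, the WORM condition forbids that color on both copies of `v`; otherwise it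
forces both copies of `v` into the pair of colors of `u`. Hence the property "the two copies get
the same color" propagates along edges, and in a connected `G` either it holds everywhere, so the
coloring induces a proper coloring of `G` and uses at least `χ(G) = k` colors, or it holds
nowhere, and then every vertex of `G ⊠ K₂` carries one of the same two colors.
-/

open SimpleGraph

/-- A K₃-WORM coloring of `G`: every triangle receives exactly two colors. -/
def IsWormColoring {V : Type*} (G : SimpleGraph V) (c : V → ℕ) : Prop :=
  ∀ u v w : V, G.Adj u v → G.Adj u w → G.Adj v w → ({c u, c v, c w} : Finset ℕ).card = 2

/-- The number of colors used by a coloring of a finite vertex set. -/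
def colorsUsed {V : Type*} [Fintype V] (c : V → ℕ) : ℕ := (Finset.univ.image c).card

/-- The K₃-WORM feasible set of `G`: the set of `s` such that `G` has a
K₃-WORM coloring using exactly `s` colors. -/
def wormFeasible {V : Type*} [Fintype V] (G : SimpleGraph V) : Set ℕ :=
  {s | ∃ c : V → ℕ, IsWormColoring G c ∧ colorsUsed c = s}

/-- `G` is triangle-free: it has no three pairwise adjacent vertices. -/
def TriangleFree {V : Type*} (G : SimpleGraph V) : Prop :=
  ∀ u v w : V, G.Adj u v → G.Adj u w → G.Adj v w → False

/-- The strong product `G ⊠ K₂`, on vertex set `V × Bool`: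
`(u,i)` and `(v,j)` are adjacent iff (`u = v` and `i ≠ j`) or `u`,`v` are adjacent in `G`. -/
def strongProdK2 {V : Type*} (G : SimpleGraph V) : SimpleGraph (V × Bool) :=
  SimpleGraph.fromRel (fun p q => (p.1 = q.1 ∧ p.2 ≠ q.2) ∨ G.Adj p.1 q.1)

namespace SimpleGraph

variable {V : Type*} {G : SimpleGraph V}

lemma Reachable.eq_of_forall_adj_eq {α : Type*} (f : V → α) (hf : ∀ u v, G.Adj u v → f u = f v)
    {u v : V} (huv : G.Reachable u v) : f u = f v := by
  obtain ⟨p⟩ := huv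
  induction p with
  | nil => rfl
  | cons ha _ ih => exact (hf _ _ ha).trans ih

lemma chromaticNumber_le_card_image [Fintype V] {α : Type*} [DecidableEq α] (f : V → α)
    (hf : ∀ {u v}, G.Adj u v → f u ≠ f v) : G.chromaticNumber ≤ (Finset.univ.image f).card := by
  let C : G.Coloring (Finset.univ.image f) :=
    Coloring.mk (fun v => ⟨f v, Finset.mem_image_of_mem f (Finset.mem_univ v)⟩)
      (fun h heq => hf h (Subtype.ext_iff.mp heq))
  simpa using C.colorable.chromaticNumber_le

end SimpleGraph

lemma Finset.card_insert_insert_singleton_eq_two_iff {α : Type*} [DecidableEq α] {a b x : α} :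
    ({a, b, x} : Finset α).card = 2 ↔ (a = b ∧ x ≠ a) ∨ (a ≠ b ∧ (x = a ∨ x = b)) := by
  by_cases hab : a = b <;> by_cases hxa : x = a <;> by_cases hxb : x = b <;>
    simp_all [Finset.card_insert_of_notMem, eq_comm]

section StrongProdK2

variable {V : Type*} {G : SimpleGraph V}

lemma strongProdK2_adj_fiber (u : V) : (strongProdK2 G).Adj (u, false) (u, true) := by
  simp [strongProdK2]

lemma strongProdK2_adj_of_adj {u v : V} (h : G.Adj u v) (i j : Bool) :
    (strongProdK2 G).Adj (u, i) (v, j) := by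
  simp [strongProdK2, h, h.ne]

namespace IsWormColoring

variable {c : V × Bool → ℕ} (hc : IsWormColoring (strongProdK2 G) c)
include hc

lemma card_fiber_insert_eq_two {u v : V} (h : G.Adj u v) (i : Bool) :
    ({c (u, false), c (u, true), c (v, i)} : Finset ℕ).card = 2 :=
  hc _ _ _ (strongProdK2_adj_fiber u) (strongProdK2_adj_of_adj h _ _)
    (strongProdK2_adj_of_adj h _ _)

lemma ne_of_adj_of_fiber_eq {u v : V} (h : G.Adj u v) (hu : c (u, false) = c (u, true))
    (i : Bool) : c (v, i) ≠ c (u, false) := by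
  have := Finset.card_insert_insert_singleton_eq_two_iff.mp (hc.card_fiber_insert_eq_two h i)
  tauto

lemma eq_or_eq_of_adj_of_fiber_ne {u v : V} (h : G.Adj u v) (hu : c (u, false) ≠ c (u, true))
    (i : Bool) : c (v, i) = c (u, false) ∨ c (v, i) = c (u, true) := by
  have := Finset.card_insert_insert_singleton_eq_two_iff.mp (hc.card_fiber_insert_eq_two h i)
  tauto

lemma fiber_eq_of_adj {u v : V} (h : G.Adj u v) (hu : c (u, false) = c (u, true)) :
    c (v, false) = c (v, true) := by
  by_contra hv
  rcases hc.eq_or_eq_of_adj_of_fiber_ne h.symm hv false with hu' | hu' <;>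
    exact hc.ne_of_adj_of_fiber_eq h hu _ hu'.symm

lemma fiber_pair_eq_of_adj {u v : V} (h : G.Adj u v) (hu : c (u, false) ≠ c (u, true)) :
    ({c (u, false), c (u, true)} : Finset ℕ) = {c (v, false), c (v, true)} := by
  have hv : c (v, false) ≠ c (v, true) := fun hv => hu (hc.fiber_eq_of_adj h.symm hv)
  rcases hc.eq_or_eq_of_adj_of_fiber_ne h hu false with h0 | h0 <;>
    rcases hc.eq_or_eq_of_adj_of_fiber_ne h hu true with h1 | h1 <;>
    simp_all [Finset.pair_comm]

variable (hG : G.Preconnected)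
include hG

lemma fiber_eq_iff_of_preconnected (u v : V) :
    c (u, false) = c (u, true) ↔ c (v, false) = c (v, true) :=
  Iff.of_eq <| (hG u v).eq_of_forall_adj_eq (fun w => c (w, false) = c (w, true))
    fun _ _ hab => propext ⟨hc.fiber_eq_of_adj hab, hc.fiber_eq_of_adj hab.symm⟩

variable [Fintype V]

lemma chromaticNumber_le_colorsUsed {u : V} (hu : c (u, false) = c (u, true)) :
    G.chromaticNumber ≤ colorsUsed c := by
  have hfiber v := (hc.fiber_eq_iff_of_preconnected hG u v).mp hu
  have himage : Finset.univ.image c = Finset.univ.image (fun v => c (v, false)) := by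
    ext n
    simp only [Finset.mem_image, Finset.mem_univ, true_and, Prod.exists, Bool.exists_bool]
    grind
  rw [colorsUsed, himage]
  exact chromaticNumber_le_card_image _ fun h => (hc.ne_of_adj_of_fiber_eq h (hfiber _) _).symm

lemma colorsUsed_le_two {u : V} (hu : c (u, false) ≠ c (u, true)) : colorsUsed c ≤ 2 := by
  have hfiber v := mt (hc.fiber_eq_iff_of_preconnected hG u v).mpr hu
  have hpair v : ({c (v, false), c (v, true)} : Finset ℕ) = {c (u, false), c (u, true)} :=
    (hG v u).eq_of_forall_adj_eq (fun w => ({c (w, false), c (w, true)} : Finset ℕ))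
      fun a _ hab => hc.fiber_pair_eq_of_adj hab (hfiber a)
  have hsub : Finset.univ.image c ⊆ {c (u, false), c (u, true)} := by
    rintro _ hn
    obtain ⟨⟨v, i⟩, -, rfl⟩ := Finset.mem_image.mp hn
    rw [← hpair v]
    cases i <;> simp
  exact (Finset.card_le_card hsub).trans Finset.card_le_two

end IsWormColoring

end StrongProdK2

theorem strongProdK2_no_worm_coloring_in_gap_general {V : Type*} [Fintype V]
    (G : SimpleGraph V) (k : ℕ)
    (hconn : G.Connected)
    (hchi : G.chromaticNumber = (k : ℕ∞)) :
    ∀ t : ℕ, 3 ≤ t → t ≤ k - 1 →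
      ¬ ∃ c : V × Bool → ℕ, IsWormColoring (strongProdK2 G) c ∧ colorsUsed c = t := by
  rintro t ht3 htk ⟨c, hc, rfl⟩
  obtain ⟨u⟩ := hconn.nonempty
  by_cases hu : c (u, false) = c (u, true)
  · have hle := hc.chromaticNumber_le_colorsUsed hconn.preconnected hu
    rw [hchi, Nat.cast_le] at hle
    omega
  · have := hc.colorsUsed_le_two hconn.preconnected hu
    omega

/-- If `G` is connected, triangle-free, with chromatic number `k ≥ 4`, then
`H = G ⊠ K₂` has no K₃-WORM coloring using exactly `t` colors for any `3 ≤ t ≤ k - 1`. -/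
theorem strongProdK2_no_worm_coloring_in_gap {V : Type*} [Fintype V]
    (G : SimpleGraph V) (k : ℕ) (hk : 4 ≤ k)
    (hconn : G.Connected) (htf : TriangleFree G)
    (hchi : G.chromaticNumber = (k : ℕ∞)) :
    ∀ t : ℕ, 3 ≤ t → t ≤ k - 1 →
      ¬ ∃ c : V × Bool → ℕ, IsWormColoring (strongProdK2 G) c ∧ colorsUsed c = t :=
  strongProdK2_no_worm_coloring_in_gap_general G k hconn hchi
end

section
/- For every integer k ≥ 3 there exists a finite K₃-WORM colorable graph F_k such that W^-(F_k) = k; that is, F_k admits a K₃-WORM coloring with exactly k colors but admits none with fewer than k colors. -/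
open SimpleGraph

/-!
Take `k` pairwise non-adjacent terminals and, for each pair `i < j`, a gadget made of two
double-hub wheels over 5-cycles: one with hubs `i` and `x`, and one with hubs `j` and a rim
vertex `y` of the first. In a K₃-WORM coloring the two hubs of a wheel over an odd cycle get
the same color and its rim another one, so `c i = c x ≠ c y = c j` and the terminals need `k`
colors. Conversely, color the gadget of `i < j` with `j` on the first rim and with `i`
elsewhere (terminal `j` excepted): every triangle lies inside one gadget and none of them is
monochromatic, so this is a K₃-WORM coloring with exactly `k` colors.
-/

theorem Finset.card_triple_eq_two_iff {α : Type*} [DecidableEq α] (a b c : α) :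
    ({a, b, c} : Finset α).card = 2 ↔ ¬(a = b ∧ b = c) ∧ (a = b ∨ a = c ∨ b = c) := by
  by_cases hab : a = b <;> by_cases hac : a = c <;> by_cases hbc : b = c <;>
    simp_all [Finset.card_insert_of_notMem]

namespace IsWormColoring

variable {V W : Type*} {G : SimpleGraph V} {c : V → ℕ} {u v w : V}

theorem not_monochromatic (hc : IsWormColoring G c) (huv : G.Adj u v) (huw : G.Adj u w)
    (hvw : G.Adj v w) : ¬(c u = c v ∧ c v = c w) :=
  ((Finset.card_triple_eq_two_iff _ _ _).1 (hc u v w huv huw hvw)).1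

theorem not_rainbow (hc : IsWormColoring G c) (huv : G.Adj u v) (huw : G.Adj u w)
    (hvw : G.Adj v w) : c u = c v ∨ c u = c w ∨ c v = c w :=
  ((Finset.card_triple_eq_two_iff _ _ _).1 (hc u v w huv huw hvw)).2

theorem of_forall_eq_or_eq {x y : ℕ} (hxy : ∀ v, c v = x ∨ c v = y)
    (hmono : ∀ u v w, G.Adj u v → G.Adj u w → G.Adj v w → ¬(c u = c v ∧ c v = c w)) :
    IsWormColoring G c := by
  intro u v w huv huw hvw
  refine (Finset.card_triple_eq_two_iff _ _ _).2 ⟨hmono u v w huv huw hvw, ?_⟩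
  rcases hxy u with hu | hu <;> rcases hxy v with hv | hv <;> rcases hxy w with hw | hw <;>
    simp only [hu, hv, hw, true_or, or_true]

theorem comp {H : SimpleGraph W} (hc : IsWormColoring G c) (f : H →g G) :
    IsWormColoring H (c ∘ f) :=
  fun u v w huv huw hvw => hc (f u) (f v) (f w) (f.map_adj huv) (f.map_adj huw) (f.map_adj hvw)

/-- If the hubs had different colors, every rim vertex would take one of them and adjacent rim
vertices would have to differ, a proper 2-coloring of an odd cycle. -/
theorem eq_of_oddWheel (hc : IsWormColoring G c) {a b : V} (hab : G.Adj a b) {n : ℕ}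
    (hn : Odd n) (r : ℕ → V) (hr : ∀ i < n, G.Adj (r i) (r (i + 1))) (hclosed : r n = r 0)
    (ha : ∀ i < n, G.Adj a (r i)) (hb : ∀ i < n, G.Adj b (r i)) : c a = c b := by
  by_contra hne
  have upto : ∀ {P : V → Prop}, (∀ i < n, P (r i)) → ∀ i ≤ n, P (r i) := fun h i hi =>
    hi.lt_or_eq.elim (h i) fun hi => hi ▸ hclosed ▸ h 0 hn.pos
  have hside : ∀ i ≤ n, c (r i) = c a ∨ c (r i) = c b :=
    upto (P := fun x => c x = c a ∨ c x = c b) fun i hi => by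
      have := hc.not_rainbow hab (ha i hi) (hb i hi)
      tauto
  have hflip : ∀ i < n, c (r (i + 1)) ≠ c (r i) := fun i hi h => by
    have hna := hc.not_monochromatic (ha i hi) (upto ha (i + 1) hi) (hr i hi)
    have hnb := hc.not_monochromatic (hb i hi) (upto hb (i + 1) hi) (hr i hi)
    rcases hside i hi.le with h' | h' <;> simp_all
  have hparity : ∀ i ≤ n, (c (r i) = c (r 0) ↔ Even i) := by
    intro i
    induction i with
    | zero => simp
    | succ i ih =>
      intro hi
      rw [Nat.even_add_one, ← ih (by omega)]
      have := hflip i hi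
      have := hside i (by omega)
      have := hside (i + 1) hi
      have := hside 0 (by omega)
      omega
  exact Nat.not_even_iff_odd.2 hn ((hparity n le_rfl).1 (by rw [hclosed]))

end IsWormColoring

theorem colorsUsed_comp_equiv {V W : Type*} [Fintype V] [Fintype W] (c : W → ℕ) (e : V ≃ W) :
    colorsUsed (c ∘ e) = colorsUsed c := by
  classical
  rw [colorsUsed, ← Finset.image_image, Finset.image_univ_of_surjective e.surjective, colorsUsed]

theorem wormFeasible_subset_of_iso {V W : Type*} [Fintype V] [Fintype W] {G : SimpleGraph V}
    {H : SimpleGraph W} (e : G ≃g H) : wormFeasible G ⊆ wormFeasible H := by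
  rintro s ⟨c, hc, rfl⟩
  exact ⟨c ∘ e.symm, hc.comp e.symm.toHom, colorsUsed_comp_equiv c e.symm.toEquiv⟩

theorem wormFeasible_eq_of_iso {V W : Type*} [Fintype V] [Fintype W] {G : SimpleGraph V}
    {H : SimpleGraph W} (e : G ≃g H) : wormFeasible G = wormFeasible H :=
  (wormFeasible_subset_of_iso e).antisymm (wormFeasible_subset_of_iso e.symm)

namespace WormLower

def doubleWheelEdges {α : Type*} [DecidableEq α] (n : ℕ) (a b : α) (r : ℕ → α) :
    Finset (α × α) :=
  insert (a, b) ((Finset.range n).biUnion fun i => {(a, r i), (b, r i), (r i, r (i + 1))})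

abbrev rim₁ (i : ℕ) : Bool ⊕ Fin 11 := .inr ⟨i % 5 + 1, by omega⟩

abbrev rim₂ (i : ℕ) : Bool ⊕ Fin 11 := .inr ⟨i % 5 + 6, by omega⟩

def gadgetEdges : Finset ((Bool ⊕ Fin 11) × (Bool ⊕ Fin 11)) :=
  doubleWheelEdges 5 (.inl false) (.inr 0) rim₁ ∪ doubleWheelEdges 5 (.inl true) (.inr 1) rim₂

def gadget : SimpleGraph (Bool ⊕ Fin 11) where
  Adj x y := (x, y) ∈ gadgetEdges ∨ (y, x) ∈ gadgetEdges
  symm := ⟨fun _ _ => Or.symm⟩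
  loopless := ⟨by decide⟩

instance : DecidableRel gadget.Adj := fun _ _ => inferInstanceAs (Decidable (_ ∨ _))

theorem gadget_not_adj_inl (x y : Bool) : ¬gadget.Adj (.inl x) (.inl y) := by
  revert x y
  decide

theorem gadget_terminals_ne {c : Bool ⊕ Fin 11 → ℕ} (hc : IsWormColoring gadget c) :
    c (.inl false) ≠ c (.inl true) := by
  have h₁ : c (.inl false) = c (.inr 0) :=
    hc.eq_of_oddWheel (by decide) (n := 5) (by decide) rim₁ (by decide) rfl
      (by decide) (by decide)
  have h₂ : c (.inl true) = c (.inr 1) :=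
    hc.eq_of_oddWheel (by decide) (n := 5) (by decide) rim₂ (by decide) rfl
      (by decide) (by decide)
  have h₃ := hc.not_monochromatic (u := .inl false) (v := .inr 0) (w := .inr 1)
    (by decide) (by decide) (by decide)
  omega

def gadgetColor : Bool ⊕ Fin 11 → Bool :=
  Sum.elim id fun t => 1 ≤ t.val ∧ t.val ≤ 5

theorem gadgetColor_not_monochromatic : ∀ x y z, gadget.Adj x y → gadget.Adj x z →
    gadget.Adj y z → ¬(gadgetColor x = gadgetColor y ∧ gadgetColor y = gadgetColor z) := by
  decide

abbrev Pair (k : ℕ) := {p : Fin k × Fin k // p.1 < p.2}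

abbrev Vert (k : ℕ) := Fin k ⊕ Pair k × Fin 11

variable {k : ℕ}

def place (p : Pair k) : Bool ⊕ Fin 11 ↪ Vert k where
  toFun := Sum.elim (fun b => .inl (bif b then p.1.2 else p.1.1)) fun t => .inr (p, t)
  inj' := by
    rintro (a | s) (b | t) h
    · cases a <;> cases b <;> simp_all [p.2.ne, p.2.ne']
    · cases h
    · cases h
    · simp_all

@[simp]
theorem place_inr (p : Pair k) (t : Fin 11) : place p (.inr t) = .inr (p, t) := rfl

theorem eq_of_place_inr_eq {p q : Pair k} {t : Fin 11} {a : Bool ⊕ Fin 11}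
    (h : place q (.inr t) = place p a) : q = p ∧ a = .inr t := by
  rcases a with a | s
  · cases h
  · simp_all

variable (k) in
def graph : SimpleGraph (Vert k) := ⨆ p, gadget.map (place p)

theorem exists_place_of_adj {u v : Vert k} (h : (graph k).Adj u v) :
    ∃ p a b, gadget.Adj a b ∧ place p a = u ∧ place p b = v := by
  simpa [graph] using h

theorem not_adj_inl (m m' : Fin k) : ¬(graph k).Adj (.inl m) (.inl m') := by
  intro h
  obtain ⟨p, a | s, b | t, h, ha, hb⟩ := exists_place_of_adj h
  · exact gadget_not_adj_inl _ _ h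
  · exact Sum.inr_ne_inl hb
  all_goals exact Sum.inr_ne_inl ha

theorem exists_place_eq_of_adj_inr {p : Pair k} {t : Fin 11} {v : Vert k}
    (h : (graph k).Adj (.inr (p, t)) v) : ∃ b, place p b = v := by
  obtain ⟨q, a, b, -, ha, hb⟩ := exists_place_of_adj h
  obtain ⟨rfl, -⟩ := eq_of_place_inr_eq (p := q) ha.symm
  exact ⟨b, hb⟩

theorem adj_place_iff (p : Pair k) (a b : Bool ⊕ Fin 11) :
    (graph k).Adj (place p a) (place p b) ↔ gadget.Adj a b := by
  refine ⟨fun h => ?_, fun h => iSup_adj.2 ⟨p, (map_adj _ _ _ _).2 ⟨a, b, h, rfl, rfl⟩⟩⟩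
  obtain ⟨q, a' | s, b' | t, h', ha, hb⟩ := exists_place_of_adj h
  · exact (gadget_not_adj_inl _ _ h').elim
  · obtain ⟨rfl, rfl⟩ := eq_of_place_inr_eq hb
    rwa [(place q).injective ha] at h'
  all_goals
    obtain ⟨rfl, rfl⟩ := eq_of_place_inr_eq ha
    rwa [(place q).injective hb] at h'

def placeEmbedding (p : Pair k) : gadget ↪g graph k where
  toEmbedding := place p
  map_rel_iff' := adj_place_iff p _ _

-- Terminals are pairwise non-adjacent and every neighbour of a gadget vertex lies in its gadget.
theorem exists_place_of_triangle {u v w : Vert k} (huv : (graph k).Adj u v)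
    (huw : (graph k).Adj u w) (hvw : (graph k).Adj v w) :
    ∃ p a b c, place p a = u ∧ place p b = v ∧ place p c = w := by
  rcases u with m | ⟨p, t⟩
  · rcases v with m' | ⟨p, t⟩
    · exact (not_adj_inl m m' huv).elim
    · obtain ⟨a, ha⟩ := exists_place_eq_of_adj_inr huv.symm
      obtain ⟨c, hc⟩ := exists_place_eq_of_adj_inr hvw
      exact ⟨p, a, .inr t, c, ha, rfl, hc⟩
  · obtain ⟨b, hb⟩ := exists_place_eq_of_adj_inr huv
    obtain ⟨c, hc⟩ := exists_place_eq_of_adj_inr huw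
    exact ⟨p, .inr t, b, c, rfl, hb, hc⟩

variable (k) in
def coloring : Vert k → ℕ :=
  Sum.elim Fin.val fun x => bif gadgetColor (.inr x.2) then x.1.1.2 else x.1.1.1

theorem coloring_place (p : Pair k) (a : Bool ⊕ Fin 11) :
    coloring k (place p a) = bif gadgetColor a then (p.1.2 : ℕ) else p.1.1 := by
  rcases a with (_ | _) | t <;> rfl

theorem isWormColoring_coloring_comp_place (p : Pair k) :
    IsWormColoring gadget (coloring k ∘ place p) := by
  have hinj : Function.Injective fun b : Bool => bif b then (p.1.2 : ℕ) else p.1.1 := by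
    have := Fin.val_injective.ne p.2.ne
    intro b b'
    cases b <;> cases b' <;> simp_all [eq_comm]
  refine IsWormColoring.of_forall_eq_or_eq (x := p.1.1) (y := p.1.2) (fun a => ?_) ?_
  · rw [Function.comp_apply, coloring_place]
    cases gadgetColor a <;> simp
  · intro a b c hab hac hbc
    simp only [Function.comp_apply, coloring_place, hinj.eq_iff]
    exact gadgetColor_not_monochromatic a b c hab hac hbc

variable (k) in
theorem isWormColoring_coloring : IsWormColoring (graph k) (coloring k) := by
  intro u v w huv huw hvw
  obtain ⟨p, a, b, c, rfl, rfl, rfl⟩ := exists_place_of_triangle huv huw hvw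
  rw [adj_place_iff] at huv huw hvw
  exact isWormColoring_coloring_comp_place p a b c huv huw hvw

variable (k) in
theorem colorsUsed_coloring : colorsUsed (coloring k) = k := by
  suffices Finset.univ.image (coloring k) = Finset.range k by
    rw [colorsUsed, this, Finset.card_range]
  ext x
  simp only [Finset.mem_image, Finset.mem_univ, true_and, Finset.mem_range]
  constructor
  · rintro ⟨m | ⟨p, t⟩, rfl⟩
    · exact m.2
    · rw [← place_inr, coloring_place]
      cases gadgetColor (.inr t) <;> simp
  · exact fun hx => ⟨.inl ⟨x, hx⟩, rfl⟩

theorem le_colorsUsed {c : Vert k → ℕ} (hc : IsWormColoring (graph k) c) :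
    k ≤ colorsUsed c := by
  have hinj : Function.Injective (c ∘ Sum.inl) := by
    intro m m' h
    by_contra hne
    rcases lt_or_gt_of_ne hne with hlt | hlt
    · exact gadget_terminals_ne (hc.comp (placeEmbedding ⟨(m, m'), hlt⟩).toHom) h
    · exact gadget_terminals_ne (hc.comp (placeEmbedding ⟨(m', m), hlt⟩).toHom) h.symm
  simpa [colorsUsed] using Finset.card_le_card_of_injOn (c ∘ Sum.inl) (s := Finset.univ)
    (t := Finset.univ.image c) (by simp) hinj.injOn

variable (k) in
theorem isLeast_wormFeasible_graph : IsLeast (wormFeasible (graph k)) k :=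
  ⟨⟨coloring k, isWormColoring_coloring k, colorsUsed_coloring k⟩,
    fun _ ⟨_, hc, hs⟩ => hs ▸ le_colorsUsed hc⟩

end WormLower

theorem exists_graph_wormLower_eq_general {k : ℕ} :
    ∃ (n : ℕ) (G : SimpleGraph (Fin n)),
      (∃ c : Fin n → ℕ, IsWormColoring G c) ∧
      IsLeast (wormFeasible G) k := by
  have h := wormFeasible_eq_of_iso ((WormLower.graph k).overFinIso rfl) ▸
    WormLower.isLeast_wormFeasible_graph k
  obtain ⟨c, hc, -⟩ := h.1
  exact ⟨_, _, ⟨c, hc⟩, h⟩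

/-- For every `k ≥ 3` there exists a finite K₃-WORM colorable graph whose
K₃-WORM lower chromatic number is exactly `k`: it has a K₃-WORM coloring with
exactly `k` colors, but none with fewer colors. -/
theorem exists_graph_wormLower_eq {k : ℕ} (hk : 3 ≤ k) :
    ∃ (n : ℕ) (G : SimpleGraph (Fin n)),
      (∃ c : Fin n → ℕ, IsWormColoring G c) ∧
      IsLeast (wormFeasible G) k :=
  exists_graph_wormLower_eq_general
end
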